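/- Let \(L_1 \le L_0 = \mathbb{Z}^n\) have finite index \(m\) with embedding matrix \(B' \in \mathbb{Z}^{n \times n}\) (columns generating \(L_1\), \(\det B' = m\)). If \(C\) is an \(L_1\)-periodic cut of type \(\gamma = (\gamma_1, \ldots, \gamma_{n+1})\), then \((\gamma_1, \ldots, \gamma_n) \cdot y \equiv 0 \pmod m\) for every column \(y\) of \(B'\); i.e. \(\sum_{i=1}^n \gamma_i y_i \in m\mathbb{Z}\) for every \(y \in L_1\). -/

import Mathlib

open scoped Classical

noncomputable section

/-- Vertices of the universal cover quiver: the lattice `L₀ = ℤⁿ`. -/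
abbrev V (n : ℕ) := Fin n → ℤ

/-- The vectors `α₁, …, αₙ` (standard basis) and `α_{n+1} = -∑ αᵢ`. -/
def alphav (n : ℕ) (i : Fin (n + 1)) : V n :=
  if h : (i : ℕ) < n then Pi.single ⟨i, h⟩ 1 else fun _ => -1

/-- An arrow of `Q̂` is a pair (source, type): the arrow `x → x + αᵢ`. -/
abbrev Arrow (n : ℕ) := V n × Fin (n + 1)

/-- The list of arrows of the path starting at `x` with list of types `l`. -/
def pathArrows (n : ℕ) : V n → List (Fin (n + 1)) → List (Arrow n)
  | _, [] => []
  | x, i :: l => (x, i) :: pathArrows n (x + alphav n i) l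

/-- An elementary cycle: length `n+1`, pairwise distinct types, closed. -/
def IsElemCycle (n : ℕ) (l : List (Fin (n + 1))) : Prop :=
  l.length = n + 1 ∧ l.Nodup ∧ (l.map (alphav n)).sum = 0

/-- A cut: every elementary cycle passes through exactly one arrow of `C`. -/
def IsCut (n : ℕ) (C : Set (Arrow n)) : Prop :=
  ∀ (x : V n) (l : List (Fin (n + 1))), IsElemCycle n l →
    ∃! a : Arrow n, a ∈ pathArrows n x l ∧ a ∈ C

/-- Height increment of a single arrow. -/
def hInc (n : ℕ) (C : Set (Arrow n)) (a : Arrow n) : ℤ :=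
  if a ∈ C then -(n : ℤ) else 1

/-- Height increment along the path from `x` with types `l`. -/
def pathH (n : ℕ) (C : Set (Arrow n)) (x : V n) (l : List (Fin (n + 1))) : ℤ :=
  ((pathArrows n x l).map (hInc n C)).sum

/-- A height function. -/
def IsHeight (n : ℕ) (h : V n → ℤ) : Prop :=
  h 0 = 0 ∧ ∀ (x : V n) (i : Fin (n + 1)),
    h (x + alphav n i) = h x + 1 ∨ h (x + alphav n i) = h x - n

/-- The cut associated to a height function. -/
def cutOf (n : ℕ) (h : V n → ℤ) : Set (Arrow n) :=
  {a | h (a.1 + alphav n a.2) = h a.1 - n}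

/-- `L₁`-periodicity of a set of arrows. -/
def IsPeriodic (n : ℕ) (L1 : AddSubgroup (V n)) (C : Set (Arrow n)) : Prop :=
  ∀ a : Arrow n, ∀ y ∈ L1, (a ∈ C ↔ (a.1 + y, a.2) ∈ C)

/-- The type of a periodic cut: the number of `L₁`-orbits of cut arrows of type `i`. -/
def typeCount (n : ℕ) (L1 : AddSubgroup (V n)) (C : Set (Arrow n)) (i : Fin (n + 1)) : ℕ :=
  Nat.card ((QuotientAddGroup.mk (s := L1)) '' {x : V n | (x, i) ∈ C})

end


section AuxLemmas

open List

/-- Number of cut arrows along the path from `x` with types `l`. -/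
noncomputable def cnt (n : ℕ) (C : Set (Arrow n)) (x : V n) (l : List (Fin (n + 1))) : ℕ :=
  (pathArrows n x l).countP (fun a => decide (a ∈ C))

variable {n : ℕ} {C : Set (Arrow n)}

lemma cnt_cons (x : V n) (i : Fin (n + 1)) (l : List (Fin (n + 1))) :
    cnt n C x (i :: l) = (if (x, i) ∈ C then 1 else 0) + cnt n C (x + alphav n i) l := by
  simp only [cnt, pathArrows, List.countP_cons, decide_eq_true_eq]
  split <;> simp [Nat.add_comm]

lemma map_snd_pathArrows (x : V n) (l : List (Fin (n + 1))) :
    (pathArrows n x l).map Prod.snd = l := by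
  induction l generalizing x with
  | nil => rfl
  | cons i l ih => simp [pathArrows, ih]

lemma nodup_pathArrows (x : V n) {l : List (Fin (n + 1))} (hl : l.Nodup) :
    (pathArrows n x l).Nodup := by
  have h := map_snd_pathArrows x l
  exact List.Nodup.of_map Prod.snd (by rw [h]; exact hl)

lemma eq_singleton_of_forall {α : Type*} {a : α} :
    ∀ (L : List α), L.Nodup → a ∈ L → (∀ b ∈ L, b = a) → L = [a] := by
  intro L
  induction L with
  | nil => intro _ h; simp at h
  | cons b tl ih =>
    intro hnd hmem hall
    have hb : b = a := hall b (by simp)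
    subst hb
    have htl : tl = [] := by
      rcases tl.eq_nil_or_concat with h | ⟨l₂, c, rfl⟩
      · exact h
      · exfalso
        have hc : c = b := hall c (by simp)
        have hnb : b ∉ l₂.concat c := (List.nodup_cons.mp hnd).1
        simp [List.concat_eq_append, hc] at hnb
    simp [htl]

lemma cut_cnt_one (hC : IsCut n C) (x : V n) {l : List (Fin (n + 1))}
    (hl : IsElemCycle n l) : cnt n C x l = 1 := by
  obtain ⟨a, ⟨ham, haC⟩, hu⟩ := hC x l hl
  have hnd : (pathArrows n x l).Nodup := nodup_pathArrows x hl.2.1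
  have hfil : (pathArrows n x l).filter (fun a => decide (a ∈ C)) = [a] := by
    apply eq_singleton_of_forall
    · exact hnd.filter _
    · simp only [List.mem_filter, decide_eq_true_eq]; exact ⟨ham, haC⟩
    · intro b hb
      simp only [List.mem_filter, decide_eq_true_eq] at hb
      exact hu b hb
  simp [cnt, List.countP_eq_length_filter, hfil]

lemma alphav_castSucc (i : Fin n) : alphav n i.castSucc = Pi.single i (1 : ℤ) := by
  have h : ((i.castSucc : Fin (n + 1)) : ℕ) < n := i.isLt
  simp only [alphav, dif_pos h]
  congr 1

lemma alphav_last : alphav n (Fin.last n) = fun _ => (-1 : ℤ) := by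
  simp only [alphav, Fin.val_last, dif_neg (lt_irrefl n)]

lemma alphav_sum : ∑ i : Fin (n + 1), alphav n i = 0 := by
  rw [Fin.sum_univ_castSucc]
  have h1 : ∑ i : Fin n, alphav n i.castSucc = fun _ => (1 : ℤ) := by
    simp only [alphav_castSucc]
    funext j
    simp [Finset.sum_apply, Pi.single_apply]
  rw [h1, alphav_last]
  funext j
  simp

lemma isElemCycle_of_perm {l : List (Fin (n + 1))}
    (h : l.Perm (List.finRange (n + 1))) : IsElemCycle n l := by
  refine ⟨by rw [h.length_eq, List.length_finRange], h.nodup_iff.mpr (List.nodup_finRange _), ?_⟩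
  rw [(h.map (alphav n)).sum_eq, ← Fin.sum_univ_def, alphav_sum]

lemma cnt_swap (hC : IsCut n C) (x : V n) (i j : Fin (n + 1)) :
    (if (x, i) ∈ C then 1 else 0) + (if (x + alphav n i, j) ∈ C then 1 else 0)
      = (if (x, j) ∈ C then 1 else 0) + (if (x + alphav n j, i) ∈ C then 1 else 0) := by
  rcases eq_or_ne i j with rfl | hij
  · rfl
  · set r : List (Fin (n + 1)) :=
      (List.finRange (n + 1)).filter (fun k => !(k == i) && !(k == j)) with hr
    have hmemr : ∀ k : Fin (n + 1), k ∈ r ↔ (k ≠ i ∧ k ≠ j) := by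
      intro k; simp [hr, List.mem_filter]
    have hrnd : r.Nodup := (List.nodup_finRange _).filter _
    have hperm1 : (i :: j :: r).Perm (List.finRange (n + 1)) := by
      rw [List.perm_iff_count]
      intro k
      have hk : k ∈ List.finRange (n + 1) := List.mem_finRange k
      have hfc : (List.finRange (n + 1)).count k = 1 :=
        List.count_eq_one_of_mem (List.nodup_finRange _) hk
      rw [hfc]
      rcases eq_or_ne k i with rfl | hki
      · have hnr : k ∉ r := by rw [hmemr]; tauto
        simp [List.count_cons, hij.symm, List.count_eq_zero.mpr hnr]
      · rcases eq_or_ne k j with rfl | hkj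
        · have hnr : k ∉ r := by rw [hmemr]; tauto
          simp [List.count_cons, hki, hij, List.count_eq_zero.mpr hnr]
        · have hkr : k ∈ r := by rw [hmemr]; exact ⟨hki, hkj⟩
          simp [List.count_cons, hki, hkj, hki.symm, hkj.symm, List.count_eq_one_of_mem hrnd hkr]
    have hperm2 : (j :: i :: r).Perm (List.finRange (n + 1)) :=
      (List.Perm.swap i j r).trans hperm1
    have h1 : cnt n C x (i :: j :: r) = 1 := cut_cnt_one hC x (isElemCycle_of_perm hperm1)
    have h2 : cnt n C x (j :: i :: r) = 1 := cut_cnt_one hC x (isElemCycle_of_perm hperm2)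
    rw [cnt_cons, cnt_cons] at h1 h2
    rw [add_right_comm x (alphav n j) (alphav n i)] at h2
    omega

lemma cnt_perm (hC : IsCut n C) {l₁ l₂ : List (Fin (n + 1))} (h : l₁.Perm l₂) :
    ∀ x : V n, cnt n C x l₁ = cnt n C x l₂ := by
  induction h with
  | nil => intro _; rfl
  | cons i _ ih => intro x; rw [cnt_cons, cnt_cons, ih]
  | swap i j l =>
    intro x
    rw [cnt_cons, cnt_cons, cnt_cons, cnt_cons,
      add_right_comm x (alphav n j) (alphav n i)]
    have h := cnt_swap hC x j i
    omega
  | trans _ _ ih1 ih2 => intro x; rw [ih1, ih2]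

lemma pathArrows_append (x : V n) (l₁ l₂ : List (Fin (n + 1))) :
    pathArrows n x (l₁ ++ l₂)
      = pathArrows n x l₁ ++ pathArrows n (x + (l₁.map (alphav n)).sum) l₂ := by
  induction l₁ generalizing x with
  | nil => simp [pathArrows]
  | cons i l ih => simp [pathArrows, ih, add_assoc]

lemma cnt_append (x : V n) (l₁ l₂ : List (Fin (n + 1))) :
    cnt n C x (l₁ ++ l₂) = cnt n C x l₁ + cnt n C (x + (l₁.map (alphav n)).sum) l₂ := by
  simp [cnt, pathArrows_append, List.countP_append]

lemma cnt_translate {L1 : AddSubgroup (V n)} (hper : IsPeriodic n L1 C)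
    {y : V n} (hy : y ∈ L1) (l : List (Fin (n + 1))) :
    ∀ x : V n, cnt n C (x + y) l = cnt n C x l := by
  induction l with
  | nil => intro _; rfl
  | cons i l ih =>
    intro x
    rw [cnt_cons, cnt_cons, add_right_comm x y (alphav n i), ih]
    congr 1
    exact if_congr (hper (x, i) y hy).symm rfl rfl

lemma cnt_of_mk_eq {L1 : AddSubgroup (V n)} (hper : IsPeriodic n L1 C)
    {x x' : V n} (h : (QuotientAddGroup.mk x : V n ⧸ L1) = QuotientAddGroup.mk x')
    (l : List (Fin (n + 1))) : cnt n C x l = cnt n C x' l := by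
  have hy : -x + x' ∈ L1 := (QuotientAddGroup.eq).mp h
  have h2 := cnt_translate hper hy l x
  rw [add_neg_cancel_left] at h2
  exact h2.symm

/-- path independence across basepoints when the displacement lies in `L1`. -/
lemma cnt_const {L1 : AddSubgroup (V n)} (hC : IsCut n C) (hper : IsPeriodic n L1 C)
    {l : List (Fin (n + 1))} (hl : (l.map (alphav n)).sum ∈ L1)
    {ld : List (Fin (n + 1))} (x x' : V n) (hld : (ld.map (alphav n)).sum = x - x') :
    cnt n C x l = cnt n C x' l := by
  have hperm : (ld ++ l).Perm (l ++ ld) := List.perm_append_comm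
  have h1 := cnt_perm hC hperm x'
  rw [cnt_append, cnt_append, hld] at h1
  rw [show x' + (x - x') = x by abel] at h1
  rw [cnt_translate hper hl ld x'] at h1
  omega

noncomputable def listOf (n : ℕ) (c : Fin (n + 1) → ℕ) : List (Fin (n + 1)) :=
  (List.finRange (n + 1)).flatMap (fun i => List.replicate (c i) i)

lemma count_listOf (c : Fin (n + 1) → ℕ) (j : Fin (n + 1)) :
    (listOf n c).count j = c j := by
  unfold listOf
  rw [List.count_eq_countP, List.countP_flatMap]
  have h : ((List.finRange (n + 1)).map
        (List.countP (· == j) ∘ fun i => List.replicate (c i) i))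
      = (List.finRange (n + 1)).map (fun i => if i = j then c i else 0) := by
    apply List.map_congr_left
    intro i _
    simp only [Function.comp_apply, List.countP_replicate, beq_iff_eq]
  rw [h, ← Fin.sum_univ_def]
  simp

lemma sum_flatMap_replicate {M : Type*} [AddCommMonoid M] (L : List (Fin (n + 1)))
    (g : Fin (n + 1) → M) (k : Fin (n + 1) → ℕ) :
    (L.flatMap (fun i => List.replicate (k i) (g i))).sum = (L.map (fun i => k i • g i)).sum := by
  induction L with
  | nil => rfl
  | cons i L ih => simp [List.flatMap_cons, List.sum_append, ih, List.sum_replicate]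

lemma sum_listOf (c : Fin (n + 1) → ℕ) :
    ((listOf n c).map (alphav n)).sum
      = fun j => (c j.castSucc : ℤ) - c (Fin.last n) := by
  unfold listOf
  rw [List.map_flatMap]
  simp only [List.map_replicate]
  rw [sum_flatMap_replicate, ← Fin.sum_univ_def]
  funext j
  rw [Finset.sum_apply, Fin.sum_univ_castSucc]
  simp only [Pi.smul_apply, alphav_castSucc, alphav_last, Pi.single_apply, smul_eq_mul,
    nsmul_eq_mul, mul_ite, mul_one, mul_zero, Finset.sum_ite_eq, Finset.mem_univ, if_true]
  ring

lemma sum_indicator {L1 : AddSubgroup (V n)} (hper : IsPeriodic n L1 C)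
    [Fintype (V n ⧸ L1)] (i : Fin (n + 1)) :
    ∑ q : V n ⧸ L1, (if ((q.out, i) : Arrow n) ∈ C then 1 else 0) = typeCount n L1 C i := by
  classical
  have hset : (QuotientAddGroup.mk (s := L1)) '' {x : V n | (x, i) ∈ C}
      = {q : V n ⧸ L1 | ((q.out, i) : Arrow n) ∈ C} := by
    ext q
    constructor
    · rintro ⟨x, hx, rfl⟩
      have hmk : (QuotientAddGroup.mk x : V n ⧸ L1)
          = QuotientAddGroup.mk (QuotientAddGroup.mk (s := L1) x).out :=
        (QuotientAddGroup.out_eq' _).symm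
      have hy : -x + (QuotientAddGroup.mk (s := L1) x).out ∈ L1 := (QuotientAddGroup.eq).mp hmk
      have h2 := (hper (x, i) _ hy).mp hx
      simpa [add_neg_cancel_left] using h2
    · intro hq
      exact ⟨q.out, hq, QuotientAddGroup.out_eq' q⟩
  rw [typeCount, hset, Nat.card_coe_set_eq, Set.ncard_eq_toFinset_card', Set.toFinset_setOf,
    Finset.card_filter]

lemma sum_cnt {L1 : AddSubgroup (V n)} (hper : IsPeriodic n L1 C)
    [Fintype (V n ⧸ L1)] (l : List (Fin (n + 1))) :
    ∑ q : V n ⧸ L1, cnt n C q.out l = ∑ i : Fin (n + 1), l.count i * typeCount n L1 C i := by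
  classical
  induction l with
  | nil => simp [cnt, pathArrows]
  | cons j l ih =>
    have step : ∀ q : V n ⧸ L1, cnt n C q.out (j :: l)
        = (if ((q.out, j) : Arrow n) ∈ C then 1 else 0)
          + cnt n C (q + QuotientAddGroup.mk (alphav n j)).out l := by
      intro q
      rw [cnt_cons]
      congr 1
      apply cnt_of_mk_eq hper
      rw [QuotientAddGroup.out_eq']
      rw [QuotientAddGroup.mk_add, QuotientAddGroup.out_eq']
    rw [Finset.sum_congr rfl (fun q _ => step q), Finset.sum_add_distrib, sum_indicator hper j]
    have hre : ∑ q : V n ⧸ L1, cnt n C (q + QuotientAddGroup.mk (alphav n j)).out l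
        = ∑ q : V n ⧸ L1, cnt n C q.out l :=
      Equiv.sum_comp (Equiv.addRight (QuotientAddGroup.mk (alphav n j) : V n ⧸ L1))
        (fun q => cnt n C q.out l)
    rw [hre, ih]
    have hcnt : ∀ i : Fin (n + 1), (j :: l).count i = l.count i + if j = i then 1 else 0 := by
      intro i; rw [List.count_cons]; simp only [beq_iff_eq]
    have hR : ∑ i : Fin (n + 1), (j :: l).count i * typeCount n L1 C i
        = ∑ i : Fin (n + 1), (l.count i + if j = i then 1 else 0) * typeCount n L1 C i :=
      Finset.sum_congr rfl fun i _ => by rw [hcnt i]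
    rw [hR]
    simp_rw [add_mul]
    rw [Finset.sum_add_distrib]
    have hsum : ∑ i : Fin (n + 1), (if j = i then 1 else 0) * typeCount n L1 C i
        = typeCount n L1 C j := by
      simp [ite_mul]
    rw [hsum]
    omega

lemma exists_connector (d : V n) :
    ∃ ld : List (Fin (n + 1)), (ld.map (alphav n)).sum = d := by
  classical
  set t : ℕ := ∑ i : Fin n, (d i).natAbs with ht
  have hty : ∀ j : Fin n, (0 : ℤ) ≤ d j + t := by
    intro j
    have h1 : (d j).natAbs ≤ t :=
      Finset.single_le_sum (f := fun i => (d i).natAbs) (fun _ _ => Nat.zero_le _)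
        (Finset.mem_univ j)
    omega
  set c : Fin (n + 1) → ℕ := fun k => if h : (k : ℕ) < n then (d ⟨k, h⟩ + t).toNat else t with hc
  refine ⟨listOf n c, ?_⟩
  rw [sum_listOf]
  funext j
  have hccs : c j.castSucc = (d j + t).toNat := by
    have hlt : ((j.castSucc : Fin (n + 1)) : ℕ) < n := j.isLt
    simp only [hc, dif_pos hlt]
    have hj : (⟨((j.castSucc : Fin (n + 1)) : ℕ), hlt⟩ : Fin n) = j := Fin.ext (by simp)
    rw [hj]
  have hcl : c (Fin.last n) = t := by
    simp only [hc, Fin.val_last, dif_neg (lt_irrefl n)]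
  rw [hccs, hcl, Int.toNat_of_nonneg (hty j)]
  ring

end AuxLemmas


/-- divisibility condition satisfied by the type of a periodic cut. -/
theorem stmt_11 (n m : ℕ) (hn : 1 ≤ n) (hm : 0 < m)
    (L1 : AddSubgroup (V n)) (hidx : L1.index = m)
    (C : Set (Arrow n)) (hC : IsCut n C) (hper : IsPeriodic n L1 C) :
    ∀ y ∈ L1, (m : ℤ) ∣ ∑ i : Fin n, (typeCount n L1 C i.castSucc : ℤ) * y i := by
  classical
  intro y hy
  have hcard : Nat.card (V n ⧸ L1) = m := by
    rw [← AddSubgroup.index_eq_card, hidx]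
  haveI : Finite (V n ⧸ L1) := Nat.finite_of_card_ne_zero (by omega)
  haveI : Fintype (V n ⧸ L1) := Fintype.ofFinite _
  have hcardF : Fintype.card (V n ⧸ L1) = m := by
    rw [← Nat.card_eq_fintype_card, hcard]
  set γ : Fin (n + 1) → ℕ := typeCount n L1 C with hγ
  set t : ℕ := ∑ i : Fin n, (y i).natAbs with ht
  have hty : ∀ j : Fin n, (0 : ℤ) ≤ y j + t := by
    intro j
    have h1 : (y j).natAbs ≤ t :=
      Finset.single_le_sum (f := fun i => (y i).natAbs) (fun _ _ => Nat.zero_le _)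
        (Finset.mem_univ j)
    omega
  set c : Fin (n + 1) → ℕ := fun k => if h : (k : ℕ) < n then (y ⟨k, h⟩ + t).toNat else t with hc
  have hccs : ∀ j : Fin n, c j.castSucc = (y j + t).toNat := by
    intro j
    have hlt : ((j.castSucc : Fin (n + 1)) : ℕ) < n := j.isLt
    simp only [hc, dif_pos hlt]
    have hj : (⟨((j.castSucc : Fin (n + 1)) : ℕ), hlt⟩ : Fin n) = j := Fin.ext (by simp)
    rw [hj]
  have hcl : c (Fin.last n) = t := by
    simp only [hc, Fin.val_last, dif_neg (lt_irrefl n)]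
  set l : List (Fin (n + 1)) := listOf n c with hl
  have hcsum : (l.map (alphav n)).sum = y := by
    rw [hl, sum_listOf]
    funext j
    rw [hccs j, hcl, Int.toNat_of_nonneg (hty j)]
    ring
  have hmem : (l.map (alphav n)).sum ∈ L1 := by rw [hcsum]; exact hy
  -- Claim II: m = ∑ γ
  have hfull : IsElemCycle n (List.finRange (n + 1)) := isElemCycle_of_perm (List.Perm.refl _)
  have claimII : m = ∑ i : Fin (n + 1), γ i := by
    have h1 := sum_cnt hper (L1 := L1) (List.finRange (n + 1))
    rw [Finset.sum_congr rfl (fun q _ => cut_cnt_one hC _ hfull)] at h1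
    rw [Finset.sum_const, Finset.card_univ, hcardF, smul_eq_mul, mul_one] at h1
    have hR : ∑ i : Fin (n + 1), (List.finRange (n + 1)).count i * γ i
        = ∑ i : Fin (n + 1), γ i :=
      Finset.sum_congr rfl fun i _ => by
        rw [List.count_eq_one_of_mem (List.nodup_finRange _) (List.mem_finRange i), one_mul]
    rw [hR] at h1
    exact h1
  -- Claim I + III for l
  have hconst : ∀ q : V n ⧸ L1, cnt n C q.out l = cnt n C 0 l := by
    intro q
    obtain ⟨ld, hld⟩ := exists_connector (q.out - 0)
    exact cnt_const hC hper hmem q.out 0 hld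
  have hMain : m * cnt n C 0 l = ∑ i : Fin (n + 1), c i * γ i := by
    have h1 := sum_cnt hper (L1 := L1) l
    rw [Finset.sum_congr rfl (fun q _ => hconst q), Finset.sum_const, Finset.card_univ,
      hcardF, smul_eq_mul] at h1
    rw [Finset.sum_congr rfl (fun i _ => by rw [hl, count_listOf])] at h1
    exact h1
  set E : ℤ := (cnt n C 0 l : ℤ) with hE
  have hZ : (m : ℤ) * E = ∑ i : Fin (n + 1), (c i : ℤ) * (γ i : ℤ) := by
    rw [hE]
    exact_mod_cast hMain
  rw [Fin.sum_univ_castSucc] at hZ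
  have hterm : ∀ i : Fin n,
      (c i.castSucc : ℤ) * (γ i.castSucc : ℤ) = (y i + (t : ℤ)) * (γ i.castSucc : ℤ) := by
    intro i
    rw [hccs i, Int.toNat_of_nonneg (hty i)]
  rw [Finset.sum_congr rfl (fun i _ => hterm i), hcl] at hZ
  have hexp : ∑ i : Fin n, (y i + (t : ℤ)) * (γ i.castSucc : ℤ)
      = (∑ i : Fin n, (γ i.castSucc : ℤ) * y i) + (t : ℤ) * ∑ i : Fin n, (γ i.castSucc : ℤ) := by
    rw [Finset.mul_sum, ← Finset.sum_add_distrib]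
    exact Finset.sum_congr rfl fun i _ => by ring
  rw [hexp] at hZ
  have hII : (m : ℤ) = (∑ i : Fin n, (γ i.castSucc : ℤ)) + (γ (Fin.last n) : ℤ) := by
    have h2 : (m : ℤ) = ∑ i : Fin (n + 1), (γ i : ℤ) := by exact_mod_cast claimII
    rw [h2, Fin.sum_univ_castSucc]
  refine ⟨E - (t : ℤ), ?_⟩
  linear_combination (-1 : ℤ) * hZ + (t : ℤ) * hII
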